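/- arXiv:1805.08560 — 2 statements merged into one kernel-verified Lean document; each statement's English description precedes it below -/
import Mathlib

section
/- In the Fock representation of the deformed quon algebra, for colored sequences $\vartheta, \theta \in \mathbb{U}_m \wr \mathfrak{S}_I$ over a multiset $I$ of $n$ positive integers, one has $\langle 0|\, a_{\vartheta(n)}\cdots a_{\vartheta(1)}\, a_{\theta(1)}^{\dag}\cdots a_{\theta(n)}^{\dag}\,|0\rangle = \sum_{\pi \in \mathbb{U}_m \wr \mathfrak{S}_n,\ \vartheta = \theta\pi} q^{\mathtt{cinv}(\pi)}.$ -/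
open scoped BigOperators

def ColoredPerm (m n : ℕ) : Type := Equiv.Perm (Fin n) × (Fin n → ZMod m)

namespace ColoredPerm

variable {m n : ℕ}

def mk (σ : Equiv.Perm (Fin n)) (α : Fin n → ZMod m) : ColoredPerm m n := (σ, α)

def perm (π : ColoredPerm m n) : Equiv.Perm (Fin n) := π.1

def colors (π : ColoredPerm m n) : Fin n → ZMod m := π.2

instance : Group (ColoredPerm m n) where
  mul π₁ π₂ := mk (π₁.perm * π₂.perm) (fun i => π₁.colors (π₂.perm i) + π₂.colors i)
  one := mk 1 0
  inv π := mk π.perm⁻¹ (fun i => -π.colors (π.perm⁻¹ i))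
  mul_assoc a b c := Prod.ext (mul_assoc _ _ _) (funext fun i => add_assoc _ _ _)
  one_mul a := Prod.ext (one_mul _) (funext fun i => zero_add _)
  mul_one a := Prod.ext (mul_one _) (funext fun i => add_zero _)
  inv_mul_cancel a := Prod.ext (inv_mul_cancel _) (funext fun i => by
    show -a.colors (a.perm⁻¹ (a.perm i)) + a.colors i = 0
    simp)

instance : DecidableEq (ColoredPerm m n) :=
  inferInstanceAs (DecidableEq (Equiv.Perm (Fin n) × (Fin n → ZMod m)))

instance [NeZero m] : Fintype (ColoredPerm m n) :=
  inferInstanceAs (Fintype (Equiv.Perm (Fin n) × (Fin n → ZMod m)))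

/-- The number of inversions of a permutation. -/
def inv' (σ : Equiv.Perm (Fin n)) : ℕ :=
  (Finset.univ.filter fun p : Fin n × Fin n => p.1 < p.2 ∧ σ p.2 < σ p.1).card

/-- The statistic `cinv`: inversions of the underlying permutation plus the number of
positions with a non-identity color. -/
def cinv (π : ColoredPerm m n) : ℕ :=
  inv' π.perm + (Finset.univ.filter fun i => π.colors i ≠ 0).card

end ColoredPerm


open ColoredPerm

/-! Moving the rightmost annihilator `a_{ϑ(1)}` to the right through the creators by the quon
relation leaves a term killed by the vacuum, plus one contraction with each creator
`a†_{θ(p)}` of the same particle, weighted by `q ^ p` for the creators it jumped over and by one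
more `q` if the colours differ. By induction on `n` this becomes a sum over the permutations
sending the first position to `p`, and `p` is exactly the number of inversions involving that
position. Finally, in a coloured permutation `π` with `ϑ = θπ` the colours are determined by the
underlying permutation, so the sum over `π` collapses to a sum over permutations. -/

open Finset Equiv

theorem mul_prod_ofFn_of_mul_eq_smul_mul_add {K A : Type*} [CommSemiring K] [Semiring A]
    [Algebra K A]
    {x : A} {c : K} {N : ℕ} (y : Fin (N + 1) → A) (d : Fin (N + 1) → K)
    (h : ∀ u, x * y u = c • (y u * x) + d u • 1) :
    x * (List.ofFn y).prod = c ^ (N + 1) • ((List.ofFn y).prod * x)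
      + ∑ p : Fin (N + 1), (c ^ (p : ℕ) * d p) • (List.ofFn (y ∘ p.succAbove)).prod := by
  induction N with
  | zero => simpa using h 0
  | succ N ih =>
    have prod_succ {M : ℕ} (z : Fin (M + 1) → A) :
        (List.ofFn z).prod = z 0 * (List.ofFn (z ∘ Fin.succ)).prod := by
      rw [List.ofFn_succ, List.prod_cons]; rfl
    have erase_succ (p : Fin (N + 1)) :
        (List.ofFn (y ∘ p.succ.succAbove)).prod
          = y 0 * (List.ofFn (y ∘ Fin.succ ∘ p.succAbove)).prod := by
      rw [prod_succ]; simp [Function.comp_def]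
    rw [prod_succ, ← mul_assoc, h 0, add_mul, smul_mul_assoc, mul_assoc,
      ih (y ∘ Fin.succ) (d ∘ Fin.succ) (fun u => h u.succ)]
    conv_rhs => rw [Fin.sum_univ_succ]
    simp only [erase_succ, Fin.succAbove_zero, Fin.val_succ, Fin.val_zero, pow_zero, one_mul,
      mul_add, smul_add, mul_smul_comm, smul_smul, Finset.mul_sum, Finset.smul_sum,
      smul_mul_assoc, mul_assoc, pow_succ, Function.comp_assoc, Function.comp_apply]
    simp only [mul_left_comm c]
    abel

namespace ColoredPerm

variable {n : ℕ}

def consPerm (p : Fin (n + 1)) (σ : Perm (Fin n)) : Perm (Fin (n + 1)) :=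
  (Fin.cycleRange p)⁻¹ * Perm.decomposeFin.symm (0, σ)

@[simp] theorem consPerm_zero (p : Fin (n + 1)) (σ : Perm (Fin n)) : consPerm p σ 0 = p := by
  rw [consPerm, Perm.mul_apply, Perm.decomposeFin_symm_apply_zero, Perm.inv_eq_iff_eq,
    Fin.cycleRange_self]

@[simp] theorem consPerm_succ (p : Fin (n + 1)) (σ : Perm (Fin n)) (i : Fin n) :
    consPerm p σ i.succ = p.succAbove (σ i) := by
  rw [consPerm, Perm.mul_apply, Perm.decomposeFin_symm_apply_succ, swap_self, refl_apply,
    Perm.inv_eq_iff_eq, Fin.cycleRange_succAbove]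

theorem consPerm_bijective :
    Function.Bijective fun x : Fin (n + 1) × Perm (Fin n) => consPerm x.1 x.2 := by
  refine (Fintype.bijective_iff_injective_and_card _).2 ⟨?_, ?_⟩
  · rintro ⟨p, σ⟩ ⟨p', σ'⟩ h
    have hp : p = p' := by simpa using congr($h 0)
    subst hp
    have hσ : σ = σ' := Perm.ext fun i => Fin.succAbove_right_injective (p := p) <| by
      simpa using congr($h i.succ)
    subst hσ
    rfl
  · simp [Fintype.card_perm, Nat.factorial_succ]

theorem inv'_eq_sum_card (σ : Perm (Fin n)) : inv' σ = ∑ i, #{j | i < j ∧ σ j < σ i} := by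
  simp only [inv', Finset.card_filter, Fintype.sum_prod_type]

theorem inv'_consPerm (p : Fin (n + 1)) (σ : Perm (Fin n)) :
    inv' (consPerm p σ) = p + inv' σ := by
  have first_row : #{j | 0 < j ∧ consPerm p σ j < consPerm p σ 0} = (p : ℕ) := by
    rw [Fin.card_filter_univ_succ']
    simp only [lt_self_iff_false, false_and, if_false, zero_add, Fin.succ_pos, true_and,
      consPerm_succ, consPerm_zero, Fin.succAbove_lt_iff_castSucc_lt]
    simp only [Fin.lt_def, Fin.val_castSucc]
    rw [Finset.card_filter, Equiv.sum_comp σ (fun x : Fin n => if (x : ℕ) < p then 1 else 0),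
      ← Finset.card_filter, Fin.card_filter_val_lt, min_eq_right (Nat.lt_succ_iff.1 p.isLt)]
  have other_rows (i : Fin n) : #{j | i.succ < j ∧ consPerm p σ j < consPerm p σ i.succ}
      = #{j | i < j ∧ σ j < σ i} := by
    rw [Fin.card_filter_univ_succ']
    simp [Fin.succAbove_lt_succAbove_iff]
  rw [inv'_eq_sum_card, inv'_eq_sum_card, Fin.sum_univ_succ, first_row]
  simp only [other_rows]

section Weight

variable {K : Type*} [Semiring K] {ι γ : Type*} [DecidableEq ι] [DecidableEq γ]

def permWeight (q : K) (φ ψ : Fin n → ι) (ε δ : Fin n → γ) (σ : Perm (Fin n)) : K :=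
  if φ = ψ ∘ σ then q ^ (inv' σ + #{i | ε i ≠ δ (σ i)}) else 0

theorem permWeight_consPerm (q : K) (φ ψ : Fin (n + 1) → ι) (ε δ : Fin (n + 1) → γ)
    (p : Fin (n + 1)) (σ : Perm (Fin n)) :
    permWeight q φ ψ ε δ (consPerm p σ)
      = q ^ (p : ℕ) * (if ψ p = φ 0 then q ^ (if ε 0 = δ p then 0 else 1) else 0)
        * permWeight q (φ ∘ Fin.succ) (ψ ∘ p.succAbove) (ε ∘ Fin.succ) (δ ∘ p.succAbove) σ := by
  have match_iff : φ = ψ ∘ consPerm p σ ↔ ψ p = φ 0 ∧ φ ∘ Fin.succ = (ψ ∘ p.succAbove) ∘ σ := by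
    simp only [funext_iff, Fin.forall_fin_succ, Function.comp_apply, consPerm_zero,
      consPerm_succ, eq_comm (a := ψ p)]
  have card_mismatch : #{i | ε i ≠ δ (consPerm p σ i)}
      = (if ε 0 = δ p then 0 else 1) + #{i | (ε ∘ Fin.succ) i ≠ (δ ∘ p.succAbove) (σ i)} := by
    rw [Fin.card_filter_univ_succ']
    simp only [consPerm_zero, consPerm_succ, Function.comp_apply, ite_not]
  unfold permWeight
  rw [inv'_consPerm, card_mismatch]
  by_cases h₀ : ψ p = φ 0 <;> by_cases hs : φ ∘ Fin.succ = (ψ ∘ p.succAbove) ∘ σ <;>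
    simp only [match_iff, h₀, hs, and_self, and_false, false_and, if_true, if_false, mul_zero,
      zero_mul]
  rw [← pow_add, ← pow_add]
  congr 1
  ring

theorem sum_permWeight_succ (q : K) (φ ψ : Fin (n + 1) → ι) (ε δ : Fin (n + 1) → γ) :
    ∑ π, permWeight q φ ψ ε δ π
      = ∑ p : Fin (n + 1),
          q ^ (p : ℕ) * (if ψ p = φ 0 then q ^ (if ε 0 = δ p then 0 else 1) else 0)
            * ∑ σ, permWeight q (φ ∘ Fin.succ) (ψ ∘ p.succAbove) (ε ∘ Fin.succ)
                (δ ∘ p.succAbove) σ := by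
  rw [← Fintype.sum_bijective _ consPerm_bijective
    (fun x => permWeight q φ ψ ε δ (consPerm x.1 x.2)) _ fun _ => rfl, Fintype.sum_prod_type]
  simp only [permWeight_consPerm, Finset.mul_sum]

end Weight

section Fock

variable {K A : Type*} [CommSemiring K] [Semiring A] [Algebra K A] {ι γ : Type*}
  [DecidableEq ι] [DecidableEq γ] {q : K} {a ad : ι → γ → A}

theorem vacuum_annihilators_mul_creators_eq_sum_permWeight
    (rel : ∀ (i j : ι) (k l : γ),
      a j l * ad i k = q • (ad i k * a j l) +
        (if i = j then (q ^ (if l = k then 0 else 1)) • (1 : A) else 0))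
    (τ : A →ₗ[K] K) (hτ1 : τ 1 = 1) (hann : ∀ (x : A) (i : ι) (k : γ), τ (x * a i k) = 0)
    {n : ℕ} (φ ψ : Fin n → ι) (ε δ : Fin n → γ) :
    τ ((List.ofFn fun v => a (φ v) (ε v)).reverse.prod *
        (List.ofFn fun u => ad (ψ u) (δ u)).prod) = ∑ σ, permWeight q φ ψ ε δ σ := by
  induction n with
  | zero => simp [hτ1, permWeight, inv', funext_iff]
  | succ n ih =>
    have annihilators_succ : (List.ofFn fun v => a (φ v) (ε v)).reverse.prod
        = (List.ofFn fun v => a (φ v.succ) (ε v.succ)).reverse.prod * a (φ 0) (ε 0) := by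
      simp [List.ofFn_succ]
    have normal_order := mul_prod_ofFn_of_mul_eq_smul_mul_add (x := a (φ 0) (ε 0)) (c := q)
      (fun u => ad (ψ u) (δ u))
      (fun u => if ψ u = φ 0 then q ^ (if ε 0 = δ u then 0 else 1) else 0)
      fun u => by rw [rel, ite_smul, zero_smul]
    rw [annihilators_succ, mul_assoc, normal_order, mul_add, map_add, mul_smul_comm, map_smul,
      ← mul_assoc, hann, smul_zero, zero_add, Finset.mul_sum, map_sum, sum_permWeight_succ]
    refine Finset.sum_congr rfl fun p _ => ?_
    rw [mul_smul_comm, map_smul, smul_eq_mul, ← ih]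
    rfl

end Fock

theorem sum_coloredPerm_eq_sum_permWeight {K ι : Type*} [Semiring K] [DecidableEq ι] {m : ℕ}
    [NeZero m] (q : K) (φ ψ : Fin n → ι) (ε δ : Fin n → ZMod m) :
    (∑ π : ColoredPerm m n,
        if φ = ψ ∘ π.perm ∧ ε = (fun i => δ (π.perm i) + π.colors i) then q ^ cinv π else 0)
      = ∑ σ, permWeight q φ ψ ε δ σ := by
  refine (Fintype.sum_prod_type _).trans (Finset.sum_congr rfl fun σ _ => ?_)
  have colors_iff (α : Fin n → ZMod m) :
      (ε = fun i => δ (σ i) + α i) ↔ (fun i => ε i - δ (σ i)) = α := by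
    simp only [funext_iff, eq_sub_iff_add_eq, add_comm, eq_comm]
  simp only [perm, colors, cinv, colors_iff, ite_and, Finset.sum_ite_irrel, Finset.sum_const_zero,
    Fintype.sum_ite_eq, sub_ne_zero, permWeight]

end ColoredPerm

theorem stmt_16_general {K : Type*} [CommRing K] {A : Type*} [Ring A] [Algebra K A]
    (m : ℕ) [NeZero m] (q : K) (a ad : ℕ → ZMod m → A)
    (rel : ∀ (i j : ℕ) (k l : ZMod m),
      a j l * ad i k = q • (ad i k * a j l) +
        (if i = j then (q ^ (if l = k then 0 else 1)) • (1 : A) else 0))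
    (τ : A →ₗ[K] K) (hτ1 : τ 1 = 1)
    (hann : ∀ (x : A) (i : ℕ) (k : ZMod m), τ (x * a i k) = 0)
    (n : ℕ) (φ ψ : Fin n → ℕ) (ε δ : Fin n → ZMod m) :
    τ ((List.ofFn fun v => a (φ v) (ε v)).reverse.prod *
        (List.ofFn fun u => ad (ψ u) (δ u)).prod)
      = ∑ π : ColoredPerm m n,
          if (φ = ψ ∘ π.perm ∧ ε = fun i => δ (π.perm i) + π.colors i)
          then q ^ cinv π else 0 := by
  rw [sum_coloredPerm_eq_sum_permWeight]
  exact vacuum_annihilators_mul_creators_eq_sum_permWeight rel τ hτ1 hann φ ψ ε δ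

/-- in the Fock representation of the deformed quon algebra, for colored
sequences `ϑ = (φ,ε)` and `θ = (ψ,δ)` arranging the same multiset `I` of particle indices,
`⟨0| a_{ϑ(n)} ⋯ a_{ϑ(1)} a†_{θ(1)} ⋯ a†_{θ(n)} |0⟩ = ∑_{π : ϑ = θπ} q^{cinv π}`. -/
theorem stmt_16 {K : Type*} [CommRing K] {A : Type*} [Ring A] [Algebra K A]
    (m : ℕ) [NeZero m] (q : K) (a ad : ℕ → ZMod m → A)
    (rel : ∀ (i j : ℕ) (k l : ZMod m),
      a j l * ad i k = q • (ad i k * a j l) +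
        (if i = j then (q ^ (if l = k then 0 else 1)) • (1 : A) else 0))
    (τ : A →ₗ[K] K) (hτ1 : τ 1 = 1)
    (hann : ∀ (x : A) (i : ℕ) (k : ZMod m), τ (x * a i k) = 0)
    (hcre : ∀ (x : A) (i : ℕ) (k : ZMod m), τ (ad i k * x) = 0)
    (n : ℕ) (φ ψ : Fin n → ℕ) (ε δ : Fin n → ZMod m)
    (hI : (List.ofFn φ : Multiset ℕ) = (List.ofFn ψ : Multiset ℕ)) :
    τ ((List.ofFn fun v => a (φ v) (ε v)).reverse.prod *
        (List.ofFn fun u => ad (ψ u) (δ u)).prod)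
      = ∑ π : ColoredPerm m n,
          if (φ = ψ ∘ π.perm ∧ ε = fun i => δ (π.perm i) + π.colors i)
          then q ^ cinv π else 0 :=
  stmt_16_general m q a ad rel τ hτ1 hann n φ ψ ε δ
end

section
/- In the group algebra of the colored permutation group, the inverse of $\sum_{\xi \in \mathfrak{C}_n} q^{\mathtt{cinv}(\xi)}\xi$ equals $\prod_{i=1}^{n} \rho_i$, where $\rho_i = \frac{1+(m-2)q - q\sum_{k=1}^{m-1}\xi_i^k}{(1+(m-1)q)(1-q)}.$ -/
open scoped BigOperators

open ColoredPerm

/-- The color generator `ξ_i`. -/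
def xi {m n : ℕ} (i : Fin n) : ColoredPerm m n :=
  mk 1 (fun j => if j = i then 1 else 0)

/-!
In the commutative group algebra of the colour group `(ℤ/m)ⁿ`, the element `x` is the product
of the factors `1 + q Sᵢ`, where `Sᵢ = ∑_{k=1}^{m-1} ξᵢ^k`. Since `1 + Sᵢ` is the sum over the
cyclic group generated by `ξᵢ`, it satisfies `(1 + Sᵢ)² = m (1 + Sᵢ)`, and this relation alone gives
`(1 + q Sᵢ)(1 + (m-2)q - q Sᵢ) = (1 + (m-1)q)(1 - q)`. Everything is then transported to the
colored permutation group along the embedding `α ↦ (id, α)` of the colour group.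
-/

open MonoidAlgebra Finset

theorem one_add_smul_mul_sub_smul_of_mul_self {K A : Type*} [CommRing K] [CommRing A]
    [Algebra K A] {S : A} {c q : K} (hS : (1 + S) * (1 + S) = c • (1 + S)) :
    (1 + q • S) * (algebraMap K A (1 + (c - 2) * q) - q • S) =
      algebraMap K A ((1 + (c - 1) * q) * (1 - q)) := by
  simp only [Algebra.smul_def, map_mul, map_add, map_sub, map_one, map_ofNat] at hS ⊢
  linear_combination (-(algebraMap K A q) ^ 2) * hS

theorem geom_sum_mul_self_of_pow_eq_one {A : Type*} [Ring A] {x : A} {m : ℕ} (hx : x ^ m = 1) :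
    (∑ k ∈ range m, x ^ k) * (∑ k ∈ range m, x ^ k) = m • ∑ k ∈ range m, x ^ k := by
  set T := ∑ k ∈ range m, x ^ k
  have hTx : T * x = T := by
    have h := geom_sum_mul x m
    rwa [hx, sub_self, mul_sub, mul_one, sub_eq_zero] at h
  have hTpow : ∀ k, T * x ^ k = T := by
    intro k
    induction k with
    | zero => rw [pow_zero, mul_one]
    | succ k ih => rw [pow_succ, ← mul_assoc, ih, hTx]
  rw [mul_sum, sum_congr rfl fun k _ => hTpow k, sum_const, card_range]

theorem sum_Icc_pow_eq_geom_sum_sub_one {A : Type*} [Ring A] (x : A) {m : ℕ} (hm : m ≠ 0) :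
    ∑ k ∈ Icc 1 (m - 1), x ^ k = ∑ k ∈ range m, x ^ k - 1 := by
  rw [sum_range_eq_add_Ico _ (Nat.pos_of_ne_zero hm), pow_zero, add_sub_cancel_left,
    Icc_sub_one_right_eq_Ico_of_not_isMin (by simpa using hm)]

theorem ZMod.sum_range_natCast {M : Type*} [AddCommMonoid M] {m : ℕ} [NeZero m]
    (f : ZMod m → M) : ∑ k ∈ range m, f k = ∑ c, f c :=
  sum_nbij' (fun k => k) ZMod.val (by simp) (fun c _ => by simpa using ZMod.val_lt c)
    (fun k hk => ZMod.val_cast_of_lt (mem_range.mp hk)) (fun c _ => ZMod.natCast_zmod_val c)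
    (fun _ _ => rfl)

theorem MonoidAlgebra.prod_sum_single_ofAdd_piSingle {ι M R : Type*} [Fintype ι] [DecidableEq ι]
    [AddCommMonoid M] [Fintype M] [CommSemiring R] (w : ι → M → R) :
    ∏ i, ∑ c, single (Multiplicative.ofAdd (Pi.single i c : ι → M)) (w i c) =
      ∑ α : ι → M, single (Multiplicative.ofAdd α) (∏ i, w i (α i)) := by
  rw [prod_univ_sum, Fintype.piFinset_univ]
  refine sum_congr rfl fun α _ => ?_
  rw [prod_single, ← ofAdd_sum, univ_sum_single]

theorem RatFunc.one_add_C_mul_X_ne_zero {K : Type*} [Field K] (a : K) :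
    (1 + RatFunc.C a * RatFunc.X : RatFunc K) ≠ 0 := by
  have h : (1 + RatFunc.C a * RatFunc.X : RatFunc K) =
      algebraMap _ _ (1 + Polynomial.C a * Polynomial.X) := by
    simp
  rw [h, map_ne_zero_iff _ (RatFunc.algebraMap_injective K)]
  intro h0
  simpa using congrArg (Polynomial.eval 0) h0

theorem RatFunc.one_add_C_mul_X_mul_one_sub_X_ne_zero {K : Type*} [Field K] (a : K) :
    ((1 + RatFunc.C a * RatFunc.X) * (1 - RatFunc.X) : RatFunc K) ≠ 0 :=
  mul_ne_zero (one_add_C_mul_X_ne_zero a)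
    (by simpa [← sub_eq_add_neg] using one_add_C_mul_X_ne_zero (-1 : K))

namespace ColoredPerm

variable {m n : ℕ}

theorem inv'_one : inv' (1 : Equiv.Perm (Fin n)) = 0 := by
  rw [inv', card_eq_zero, filter_eq_empty_iff]
  exact fun p _ h => lt_asymm h.1 h.2

theorem cinv_mk_one (α : Fin n → ZMod m) : cinv (mk 1 α) = #{i | α i ≠ 0} := by
  rw [cinv, perm, mk, inv'_one, zero_add]
  rfl

def ofColors (m n : ℕ) : Multiplicative (Fin n → ZMod m) →* ColoredPerm m n where
  toFun α := mk 1 α.toAdd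
  map_one' := rfl
  map_mul' _ _ := rfl

local notation "C" => Multiplicative (Fin n → ZMod m)

abbrev colorAt (i : Fin n) (c : ZMod m) : C := Multiplicative.ofAdd (Pi.single i c)

theorem ofColors_colorAt_one (i : Fin n) : ofColors m n (colorAt i 1) = xi i :=
  congrArg (mk 1) (funext fun j => Pi.single_apply i 1 j)

theorem colorAt_zero (i : Fin n) : colorAt i (0 : ZMod m) = 1 := by
  rw [colorAt, Pi.single_zero, ofAdd_zero]

theorem colorAt_one_pow (i : Fin n) (k : ℕ) : colorAt i (1 : ZMod m) ^ k = colorAt i k := by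
  rw [← ofAdd_nsmul, ← Pi.single_smul, nsmul_one]

theorem colorAt_one_pow_self (i : Fin n) : colorAt i (1 : ZMod m) ^ m = 1 := by
  rw [colorAt_one_pow, ZMod.natCast_self, colorAt_zero]

section Factors

variable {K : Type*} [Field K]

variable (m) in
noncomputable def colorFactor (q : K) (i : Fin n) : MonoidAlgebra K C :=
  1 + q • ∑ k ∈ Icc 1 (m - 1), of K C (colorAt i 1) ^ k

variable (m) in
noncomputable def colorFactorInv (q : K) (i : Fin n) : MonoidAlgebra K C :=
  ((1 + ((m : K) - 1) * q) * (1 - q))⁻¹ •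
    (algebraMap K _ (1 + ((m : K) - 2) * q) - q • ∑ k ∈ Icc 1 (m - 1), of K C (colorAt i 1) ^ k)

theorem mapDomain_colorFactorInv (q : K) (i : Fin n) :
    mapDomainAlgHom K K (ofColors m n) (colorFactorInv m q i) =
      ((1 + ((m : K) - 1) * q) * (1 - q))⁻¹ •
        (single (1 : ColoredPerm m n) (1 + ((m : K) - 2) * q) -
          ∑ k ∈ Icc 1 (m - 1), single ((xi i) ^ k) q) := by
  rw [colorFactorInv, map_smul, map_sub, AlgHom.commutes, smul_sum, map_sum]
  simp only [of_apply, single_pow, one_pow, smul_single', mul_one, mapDomainAlgHom_apply,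
    mapDomain_single, map_pow, ofColors_colorAt_one]
  rfl

variable [NeZero m]

theorem colorFactor_mul_colorFactorInv {q : K} (hq : (1 + ((m : K) - 1) * q) * (1 - q) ≠ 0)
    (i : Fin n) : colorFactor m q i * colorFactorInv m q i = 1 := by
  have hT := geom_sum_mul_self_of_pow_eq_one
    (by rw [← map_pow, colorAt_one_pow_self, map_one] : of K C (colorAt i (1 : ZMod m)) ^ m = 1)
  rw [← sub_add_cancel (∑ k ∈ range m, _) 1, ← sum_Icc_pow_eq_geom_sum_sub_one _ (NeZero.ne m),
    add_comm, ← Nat.cast_smul_eq_nsmul K] at hT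
  rw [colorFactor, colorFactorInv, mul_smul_comm, one_add_smul_mul_sub_smul_of_mul_self hT,
    Algebra.algebraMap_eq_smul_one, smul_smul, inv_mul_cancel₀ hq, one_smul]

theorem colorFactor_eq_sum (q : K) (i : Fin n) :
    colorFactor m q i = ∑ c : ZMod m, single (colorAt i c) (if c = 0 then 1 else q) := by
  have hT : ∑ k ∈ range m, of K C (colorAt i (1 : ZMod m)) ^ k =
      ∑ c : ZMod m, single (colorAt i c) 1 := by
    simp only [of_apply, single_pow, one_pow, colorAt_one_pow]
    exact ZMod.sum_range_natCast (m := m) (fun c => single (colorAt i c) (1 : K))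
  rw [colorFactor, sum_Icc_pow_eq_geom_sum_sub_one _ (NeZero.ne m), hT,
    Fintype.sum_eq_add_sum_compl 0, Fintype.sum_eq_add_sum_compl 0, colorAt_zero, ← one_def,
    add_sub_cancel_left, if_pos rfl, smul_sum]
  refine congrArg (1 + ·) (sum_congr rfl fun c hc => ?_)
  rw [if_neg (by simpa using hc), smul_single', mul_one]

theorem prod_colorFactor (q : K) :
    ∏ i, colorFactor m q i =
      ∑ α : Fin n → ZMod m, single (Multiplicative.ofAdd α) (q ^ #{i | α i ≠ 0}) := by
  simp only [colorFactor_eq_sum, prod_sum_single_ofAdd_piSingle]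
  refine sum_congr rfl fun α _ => ?_
  rw [prod_ite, prod_const_one, one_mul, prod_const]

theorem mapDomain_prod_colorFactor (q : K) :
    mapDomainAlgHom K K (ofColors m n) (∏ i, colorFactor m q i) =
      ∑ α : Fin n → ZMod m, single (mk 1 α) (q ^ cinv (mk (1 : Equiv.Perm (Fin n)) α)) := by
  simp only [prod_colorFactor, map_sum, mapDomainAlgHom_apply, mapDomain_single, cinv_mk_one]
  rfl

end Factors

end ColoredPerm

/-- in `ℝ(q)[U_m ≀ S_n]`, the inverse of `∑_{ξ ∈ 𝔠_n} q^{cinv ξ} ξ` is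
`∏_{i=1}^n ρ_i` with `ρ_i = ((1+(m-1)q)(1-q))⁻¹ (1+(m-2)q - q ∑_{k=1}^{m-1} ξ_i^k)`. -/
theorem stmt_17 (m n : ℕ) [NeZero m] :
    let q : RatFunc ℝ := RatFunc.X
    let x : MonoidAlgebra (RatFunc ℝ) (ColoredPerm m n) :=
      ∑ α : Fin n → ZMod m,
        MonoidAlgebra.single (mk 1 α) (q ^ cinv (mk (1 : Equiv.Perm (Fin n)) α))
    let ρ : Fin n → MonoidAlgebra (RatFunc ℝ) (ColoredPerm m n) := fun i =>
      ((1 + ((m : RatFunc ℝ) - 1) * q) * (1 - q))⁻¹ •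
        (MonoidAlgebra.single (1 : ColoredPerm m n) (1 + ((m : RatFunc ℝ) - 2) * q) -
          ∑ k ∈ Finset.Icc 1 (m-1), MonoidAlgebra.single ((xi i) ^ k) q)
    x * (List.ofFn ρ).prod = 1 ∧ (List.ofFn ρ).prod * x = 1 := by
  intro q x ρ
  set Φ := mapDomainAlgHom (RatFunc ℝ) (RatFunc ℝ) (ofColors m n)
  have hq : (1 + ((m : RatFunc ℝ) - 1) * q) * (1 - q) ≠ 0 := by
    simpa using RatFunc.one_add_C_mul_X_mul_one_sub_X_ne_zero ((m : ℝ) - 1)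
  have hx : x = Φ (∏ i, colorFactor m q i) := (mapDomain_prod_colorFactor q).symm
  have hρ : (List.ofFn ρ).prod = Φ (∏ i, colorFactorInv m q i) := by
    rw [← List.prod_ofFn, map_list_prod, List.map_ofFn]
    exact congrArg _ (congrArg _ (funext fun i => (mapDomain_colorFactorInv q i).symm))
  have hinv : (∏ i : Fin n, colorFactor m q i) * ∏ i, colorFactorInv m q i = 1 := by
    rw [← prod_mul_distrib]
    exact prod_eq_one fun i _ => colorFactor_mul_colorFactorInv hq i
  rw [hx, hρ, ← map_mul, ← map_mul, hinv, mul_comm, hinv, map_one]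
  exact ⟨rfl, rfl⟩
end
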